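/- Let (v,u,S) be a C¹ solution of the non-isentropic compressible Euler equations in Lagrangian coordinates on (0,T)×ℝ. Then at every point of (0,T)×ℝ one has the identities ξ = −s_t/c = −(∂₋u)/c = −(∂₋p)/c² and ζ = r_t/c = (∂₊u)/c = −(∂₊p)/c². -/

import Mathlib

/- STATEMENT 0: For a C¹ solution (v,u,S) of the non-isentropic compressible Euler
equations in Lagrangian coordinates on (0,T)×ℝ, one has
ξ = −s_t/c = −(∂₋u)/c = −(∂₋p)/c² and ζ = r_t/c = (∂₊u)/c = −(∂₊p)/c². -/

noncomputable section
open Real Set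

/-- Partial derivative with respect to time. -/
def pt (f : ℝ → ℝ → ℝ) (t x : ℝ) : ℝ := deriv (fun τ => f τ x) t

/-- Partial derivative with respect to space. -/
def px (f : ℝ → ℝ → ℝ) (t x : ℝ) : ℝ := deriv (fun y => f t y) x

/-- `f` is continuously differentiable on `D ⊆ ℝ²`. -/
def IsC1On (f : ℝ → ℝ → ℝ) (D : Set (ℝ × ℝ)) : Prop :=
  ContDiffOn ℝ 1 (fun q : ℝ × ℝ => f q.1 q.2) D

/-- `Ŝ = e^{S/(2c_v)}`. -/
def hatSF (c_v : ℝ) (S : ℝ → ℝ → ℝ) (t x : ℝ) : ℝ := Real.exp (S t x / (2 * c_v))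

/-- `a = (2√(Kγ)/(γ−1)) v^{−(γ−1)/2}`. -/
def aE (K γ : ℝ) (v : ℝ → ℝ → ℝ) (t x : ℝ) : ℝ :=
  2 * Real.sqrt (K * γ) / (γ - 1) * v t x ^ (-(γ - 1) / 2)

/-- sound speed `c = √(Kγ) v^{−(γ+1)/2} Ŝ`. -/
def cE (K c_v γ : ℝ) (v S : ℝ → ℝ → ℝ) (t x : ℝ) : ℝ :=
  Real.sqrt (K * γ) * v t x ^ (-(γ + 1) / 2) * hatSF c_v S t x

/-- pressure `p = K e^{S/c_v} v^{−γ}`. -/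
def pE (K c_v γ : ℝ) (v S : ℝ → ℝ → ℝ) (t x : ℝ) : ℝ :=
  K * Real.exp (S t x / c_v) * v t x ^ (-γ)

/-- Riemann variable `s = u + Ŝ a`. -/
def sE (K c_v γ : ℝ) (v u S : ℝ → ℝ → ℝ) (t x : ℝ) : ℝ :=
  u t x + hatSF c_v S t x * aE K γ v t x

/-- Riemann variable `r = u − Ŝ a`. -/
def rE (K c_v γ : ℝ) (v u S : ℝ → ℝ → ℝ) (t x : ℝ) : ℝ :=
  u t x - hatSF c_v S t x * aE K γ v t x

/-- directional derivative `∂₊ = ∂_t + c ∂_x` (with the full Euler sound speed). -/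
def dplusE (K c_v γ : ℝ) (v S : ℝ → ℝ → ℝ) (f : ℝ → ℝ → ℝ) (t x : ℝ) : ℝ :=
  pt f t x + cE K c_v γ v S t x * px f t x

/-- directional derivative `∂₋ = ∂_t − c ∂_x`. -/
def dminusE (K c_v γ : ℝ) (v S : ℝ → ℝ → ℝ) (f : ℝ → ℝ → ℝ) (t x : ℝ) : ℝ :=
  pt f t x - cE K c_v γ v S t x * px f t x

/-- gradient variable `ξ = s_x − (1/γ) Ŝ_x a`. -/
def xiE (K c_v γ : ℝ) (v u S : ℝ → ℝ → ℝ) (t x : ℝ) : ℝ :=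
  px (sE K c_v γ v u S) t x - (1 / γ) * px (hatSF c_v S) t x * aE K γ v t x

/-- gradient variable `ζ = r_x + (1/γ) Ŝ_x a`. -/
def zetaE (K c_v γ : ℝ) (v u S : ℝ → ℝ → ℝ) (t x : ℝ) : ℝ :=
  px (rE K c_v γ v u S) t x + (1 / γ) * px (hatSF c_v S) t x * aE K γ v t x

/-- The non-isentropic compressible Euler equations in Lagrangian coordinates,
satisfied pointwise on `D` (for C¹ solutions the energy equation is equivalent
to `S_t = 0`), together with positivity of the specific volume. -/
def EulerSys (K c_v γ : ℝ) (v u S : ℝ → ℝ → ℝ) (D : Set (ℝ × ℝ)) : Prop :=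
  ∀ t x, (t, x) ∈ D →
    0 < v t x ∧
    pt v t x - px u t x = 0 ∧
    pt u t x + px (pE K c_v γ v S) t x = 0 ∧
    pt S t x = 0

lemma hasDerivAt_slice_t {f : ℝ → ℝ → ℝ} {D : Set (ℝ × ℝ)} (hD : IsOpen D)
    (hf : IsC1On f D) {t x : ℝ} (h : (t, x) ∈ D) :
    HasDerivAt (fun τ => f τ x) (pt f t x) t := by
  have hF : DifferentiableAt ℝ (fun q : ℝ × ℝ => f q.1 q.2) (t, x) :=
    (hf.contDiffAt (hD.mem_nhds h)).differentiableAt one_ne_zero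
  have h1 : DifferentiableAt ℝ (fun τ : ℝ => f τ x) t :=
    by
      have hg : DifferentiableAt ℝ (fun τ : ℝ => (τ, x)) t :=
        differentiableAt_fun_id.prodMk (differentiableAt_const x)
      exact hF.comp t hg
  exact h1.hasDerivAt

lemma hasDerivAt_slice_x {f : ℝ → ℝ → ℝ} {D : Set (ℝ × ℝ)} (hD : IsOpen D)
    (hf : IsC1On f D) {t x : ℝ} (h : (t, x) ∈ D) :
    HasDerivAt (fun y => f t y) (px f t x) x := by
  have hF : DifferentiableAt ℝ (fun q : ℝ × ℝ => f q.1 q.2) (t, x) :=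
    (hf.contDiffAt (hD.mem_nhds h)).differentiableAt one_ne_zero
  have h1 : DifferentiableAt ℝ (fun y : ℝ => f t y) x :=
    hF.comp x ((differentiableAt_const t).prodMk differentiableAt_id)
  exact h1.hasDerivAt

set_option maxHeartbeats 2000000 in
theorem statement0 (K c_v γ T : ℝ) (hK : 0 < K) (hcv : 0 < c_v) (hγ : 1 < γ)
    (hT : 0 < T) (v u S : ℝ → ℝ → ℝ)
    (hv : IsC1On v (Ioo 0 T ×ˢ univ)) (hu : IsC1On u (Ioo 0 T ×ˢ univ))
    (hS : IsC1On S (Ioo 0 T ×ˢ univ))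
    (hsys : EulerSys K c_v γ v u S (Ioo 0 T ×ˢ univ)) :
    ∀ t x, (t, x) ∈ (Ioo 0 T ×ˢ univ : Set (ℝ × ℝ)) →
      xiE K c_v γ v u S t x = -(pt (sE K c_v γ v u S) t x) / cE K c_v γ v S t x ∧
      xiE K c_v γ v u S t x = -(dminusE K c_v γ v S u t x) / cE K c_v γ v S t x ∧
      xiE K c_v γ v u S t x
        = -(dminusE K c_v γ v S (pE K c_v γ v S) t x) / (cE K c_v γ v S t x) ^ 2 ∧
      zetaE K c_v γ v u S t x = pt (rE K c_v γ v u S) t x / cE K c_v γ v S t x ∧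
      zetaE K c_v γ v u S t x = dplusE K c_v γ v S u t x / cE K c_v γ v S t x ∧
      zetaE K c_v γ v u S t x
        = -(dplusE K c_v γ v S (pE K c_v γ v S) t x) / (cE K c_v γ v S t x) ^ 2 := by
  intro t x hq
  have hD : IsOpen ((Ioo 0 T ×ˢ univ : Set (ℝ × ℝ))) := isOpen_Ioo.prod isOpen_univ
  obtain ⟨hV, he1, he2, hSt0⟩ := hsys t x hq
  have hvt := hasDerivAt_slice_t hD hv hq
  have hvx := hasDerivAt_slice_x hD hv hq
  have hut := hasDerivAt_slice_t hD hu hq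
  have hux := hasDerivAt_slice_x hD hu hq
  have hSt := hasDerivAt_slice_t hD hS hq
  have hSx := hasDerivAt_slice_x hD hS hq
  have hVne : v t x ≠ 0 := ne_of_gt hV
  -- derivatives of Ŝ
  have hHt : HasDerivAt (fun τ => hatSF c_v S τ x)
      (Real.exp (S t x / (2 * c_v)) * (pt S t x / (2 * c_v))) t :=
    (hSt.div_const (2 * c_v)).exp
  have hHx : HasDerivAt (fun y => hatSF c_v S t y)
      (Real.exp (S t x / (2 * c_v)) * (px S t x / (2 * c_v))) x :=
    (hSx.div_const (2 * c_v)).exp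
  -- derivatives of a
  have hat : HasDerivAt (fun τ => aE K γ v τ x)
      (2 * Real.sqrt (K * γ) / (γ - 1) *
        (pt v t x * (-(γ - 1) / 2) * v t x ^ (-(γ - 1) / 2 - 1))) t :=
    (hvt.rpow_const (Or.inl hVne)).const_mul _
  have hax : HasDerivAt (fun y => aE K γ v t y)
      (2 * Real.sqrt (K * γ) / (γ - 1) *
        (px v t x * (-(γ - 1) / 2) * v t x ^ (-(γ - 1) / 2 - 1))) x :=
    (hvx.rpow_const (Or.inl hVne)).const_mul _
  -- derivatives of p
  have hpt : HasDerivAt (fun τ => pE K c_v γ v S τ x)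
      (K * (Real.exp (S t x / c_v) * (pt S t x / c_v)) * v t x ^ (-γ)
        + K * Real.exp (S t x / c_v) * (pt v t x * (-γ) * v t x ^ (-γ - 1))) t :=
    (((hSt.div_const c_v).exp.const_mul K).mul (hvt.rpow_const (Or.inl hVne)))
  have hpx : HasDerivAt (fun y => pE K c_v γ v S t y)
      (K * (Real.exp (S t x / c_v) * (px S t x / c_v)) * v t x ^ (-γ)
        + K * Real.exp (S t x / c_v) * (px v t x * (-γ) * v t x ^ (-γ - 1))) x :=
    (((hSx.div_const c_v).exp.const_mul K).mul (hvx.rpow_const (Or.inl hVne)))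
  -- derivatives of s and r
  have hst : HasDerivAt (fun τ => sE K c_v γ v u S τ x)
      (pt u t x +
        (Real.exp (S t x / (2 * c_v)) * (pt S t x / (2 * c_v)) * aE K γ v t x +
          hatSF c_v S t x *
            (2 * Real.sqrt (K * γ) / (γ - 1) *
              (pt v t x * (-(γ - 1) / 2) * v t x ^ (-(γ - 1) / 2 - 1))))) t :=
    hut.add (hHt.mul hat)
  have hsx : HasDerivAt (fun y => sE K c_v γ v u S t y)
      (px u t x +
        (Real.exp (S t x / (2 * c_v)) * (px S t x / (2 * c_v)) * aE K γ v t x +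
          hatSF c_v S t x *
            (2 * Real.sqrt (K * γ) / (γ - 1) *
              (px v t x * (-(γ - 1) / 2) * v t x ^ (-(γ - 1) / 2 - 1))))) x :=
    hux.add (hHx.mul hax)
  have hrt : HasDerivAt (fun τ => rE K c_v γ v u S τ x)
      (pt u t x -
        (Real.exp (S t x / (2 * c_v)) * (pt S t x / (2 * c_v)) * aE K γ v t x +
          hatSF c_v S t x *
            (2 * Real.sqrt (K * γ) / (γ - 1) *
              (pt v t x * (-(γ - 1) / 2) * v t x ^ (-(γ - 1) / 2 - 1))))) t :=
    hut.sub (hHt.mul hat)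
  have hrx : HasDerivAt (fun y => rE K c_v γ v u S t y)
      (px u t x -
        (Real.exp (S t x / (2 * c_v)) * (px S t x / (2 * c_v)) * aE K γ v t x +
          hatSF c_v S t x *
            (2 * Real.sqrt (K * γ) / (γ - 1) *
              (px v t x * (-(γ - 1) / 2) * v t x ^ (-(γ - 1) / 2 - 1))))) x :=
    hux.sub (hHx.mul hax)
  -- the corresponding partial-derivative identities
  have dpt_s := hst.deriv
  have dpx_s := hsx.deriv
  have dpt_r := hrt.deriv
  have dpx_r := hrx.deriv
  have dpt_p := hpt.deriv
  have dpx_p := hpx.deriv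
  have dpx_H := hHx.deriv
  -- rewrite the equation for u using the explicit formula for p_x
  rw [show deriv (fun y => pE K c_v γ v S t y) x = px (pE K c_v γ v S) t x from rfl] at dpx_p
  rw [dpx_p] at he2
  have hvtux : pt v t x = px u t x := by linarith
  have hutval : pt u t x =
      -(K * (Real.exp (S t x / c_v) * (px S t x / c_v)) * v t x ^ (-γ)
        + K * Real.exp (S t x / c_v) * (px v t x * (-γ) * v t x ^ (-γ - 1))) := by
    linarith
  -- unfold everything in the goal
  simp only [xiE, zetaE, dminusE, dplusE, cE]
  rw [show pt (sE K c_v γ v u S) t x = _ from dpt_s,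
      show px (sE K c_v γ v u S) t x = _ from dpx_s,
      show pt (rE K c_v γ v u S) t x = _ from dpt_r,
      show px (rE K c_v γ v u S) t x = _ from dpx_r,
      show pt (pE K c_v γ v S) t x = _ from dpt_p,
      dpx_p,
      show px (hatSF c_v S) t x = _ from dpx_H]
  simp only [aE, hatSF]
  rw [hSt0, hutval, hvtux]
  -- algebraic normalization
  have hEE : Real.exp (S t x / c_v)
      = Real.exp (S t x / (2 * c_v)) * Real.exp (S t x / (2 * c_v)) := by
    rw [← Real.exp_add]
    congr 1
    field_simp
    ring
  rw [hEE]
  set V := v t x with hVdef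
  have hA : V ^ (-(γ - 1) / 2) = V ^ (-(γ + 1) / 2) * V := by
    rw [show (-(γ - 1) / 2 : ℝ) = -(γ + 1) / 2 + 1 by ring, Real.rpow_add hV,
      Real.rpow_one]
  have hB : V ^ (-(γ - 1) / 2 - 1) = V ^ (-(γ + 1) / 2) := by
    rw [show (-(γ - 1) / 2 - 1 : ℝ) = -(γ + 1) / 2 by ring]
  have hC : V ^ (-γ) = V ^ (-(γ + 1) / 2) * (V ^ (-(γ + 1) / 2) * V) := by
    rw [show (-γ : ℝ) = -(γ + 1) / 2 + (-(γ + 1) / 2 + 1) by ring, Real.rpow_add hV,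
      Real.rpow_add hV, Real.rpow_one]
  have hD2 : V ^ (-γ - 1) = V ^ (-(γ + 1) / 2) * V ^ (-(γ + 1) / 2) := by
    rw [show (-γ - 1 : ℝ) = -(γ + 1) / 2 + -(γ + 1) / 2 by ring, Real.rpow_add hV]
  rw [hA, hB, hC, hD2]
  set Q := Real.sqrt (K * γ) with hQdef
  set E := Real.exp (S t x / (2 * c_v)) with hEdef
  set P := V ^ (-(γ + 1) / 2) with hPdef
  have hQsq : Q ^ 2 = K * γ := Real.sq_sqrt (by positivity)
  have hQ0 : Q ≠ 0 := by
    rw [hQdef]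
    positivity
  have hP0 : P ≠ 0 := by
    rw [hPdef]
    positivity
  have hE0 : E ≠ 0 := by
    rw [hEdef]
    positivity
  have hγ0 : γ ≠ 0 := by linarith
  have hγ1 : γ - 1 ≠ 0 := by
    intro h; apply hγ.ne'; linarith
  have hcv0 : c_v ≠ 0 := ne_of_gt hcv
  have hKQ : K = Q ^ 2 / γ := by rw [hQsq]; field_simp
  rw [hKQ]
  simp only [zero_div, mul_zero, zero_mul, add_zero, zero_add]
  refine ⟨?_, ?_, ?_, ?_, ?_, ?_⟩ <;>
    · field_simp
      ring
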